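/- If U ⊆ {1,2,3}^k is a USP, then |U| ≤ (k+2 choose 2) · max over (n_1,n_2,n_3) with n_1+n_2+n_3 = k of min_i (k choose n_i). In particular, a USP of width k has size at most (3/2^{2/3} + o(1))^k. -/

import Mathlib

/-- At least two of three propositions hold. -/
def AtLeastTwo (P Q R : Prop) : Prop := (P ∧ Q) ∨ (P ∧ R) ∨ (Q ∧ R)

/-- A uniquely solvable puzzle of width `k`: a subset `U ⊆ {1,2,3}^k`
(symbols `1,2,3` represented by `0,1,2 : Fin 3`) such that for all permutations
`π₁, π₂, π₃` of `U`, either `π₁ = π₂ = π₃` or there exist `u ∈ U` and `i` such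
that at least two of `(π₁ u)_i = 1`, `(π₂ u)_i = 2`, `(π₃ u)_i = 3` hold. -/
def IsUSP {k : ℕ} (U : Set (Fin k → Fin 3)) : Prop :=
  ∀ π₁ π₂ π₃ : Equiv.Perm U, (π₁ = π₂ ∧ π₂ = π₃) ∨
    ∃ u : U, ∃ i : Fin k,
      AtLeastTwo (((π₁ u : U) : Fin k → Fin 3) i = 0)
        (((π₂ u : U) : Fin k → Fin 3) i = 1)
        (((π₃ u : U) : Fin k → Fin 3) i = 2)

/-!
Fix a symbol `j`. If two words of a USP had `j` in exactly the same positions, the transposition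
exchanging them, placed in slot `j` of the triple `(π₁, π₂, π₃)` next to two identities, would
violate the USP condition. Hence, among the words of `U` with a fixed letter content
`(n₁, n₂, n₃)`, the word is determined by its set of `j`-positions, so there are at most
`min_j (k choose n_j)` of them; there are `(k+2 choose 2)` letter contents. For the asymptotic
bound one of the `n_j` is at most `k/3`, and `(k choose m) 2^(k-m) ≤ 3^k` gives
`(k choose m) ≤ (3/2^{2/3})^k`; the factor `(k+2 choose 2)` is polynomial in `k`.
-/

open Finset Filter

def letterContent {α : Type*} {k : ℕ} (u : Fin k → α) : Sym α k :=
  ⟨univ.val.map u, by simp⟩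

lemma count_letterContent {α : Type*} [DecidableEq α] {k : ℕ} (u : Fin k → α) (a : α) :
    (letterContent u : Multiset α).count a = #{i | u i = a} := by
  change (univ.val.map u).count a = _
  rw [Multiset.count_map, Finset.card, Finset.filter_val]
  simp only [eq_comm]

lemma Finset.exists_card_le_card_mul_card_fiber {α β : Type*} [Fintype β] [Nonempty β]
    [DecidableEq β] (s : Finset α) (f : α → β) :
    ∃ b, #s ≤ Fintype.card β * #{a ∈ s | f a = b} := by
  obtain ⟨b, -, hb⟩ := exists_max_image univ (fun b => #{a ∈ s | f a = b}) univ_nonempty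
  refine ⟨b, ?_⟩
  rw [mul_comm]
  exact card_le_mul_card_image_of_maps_to (fun _ _ => mem_univ _) _ fun b' _ => hb b' (mem_univ _)

namespace IsUSP

variable {k : ℕ} {U : Set (Fin k → Fin 3)}

lemma exists_two_slots_of_not_eq (h : IsUSP U) (π : Fin 3 → Equiv.Perm U)
    (hπ : ¬(π 0 = π 1 ∧ π 1 = π 2)) :
    ∃ (u : U) (i : Fin k) (a b : Fin 3), a ≠ b ∧
      (π a u : Fin k → Fin 3) i = a ∧ (π b u : Fin k → Fin 3) i = b := by
  rcases h (π 0) (π 1) (π 2) with h | ⟨u, i, ⟨h₀, h₁⟩ | ⟨h₀, h₂⟩ | ⟨h₁, h₂⟩⟩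
  · exact absurd h hπ
  · exact ⟨u, i, 0, 1, by decide, h₀, h₁⟩
  · exact ⟨u, i, 0, 2, by decide, h₀, h₂⟩
  · exact ⟨u, i, 1, 2, by decide, h₁, h₂⟩

lemma eq_one_of_forall_apply_eq_iff (h : IsUSP U) (j : Fin 3) (σ : Equiv.Perm U)
    (hσ : ∀ u : U, ∀ i, (σ u : Fin k → Fin 3) i = j ↔ (u : Fin k → Fin 3) i = j) :
    σ = 1 := by
  set π : Fin 3 → Equiv.Perm U := Function.update 1 j σ
  by_contra hne
  obtain ⟨u, i, a, b, hab, ha, hb⟩ := h.exists_two_slots_of_not_eq π fun hπ => hne <| by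
    have hconst : ∀ t, π t = π 0 := by
      intro t; fin_cases t
      exacts [rfl, hπ.1.symm, (hπ.1.trans hπ.2).symm]
    have hj : j + 1 ≠ j := by fin_cases j <;> decide
    calc σ = π j := by simp [π]
      _ = π (j + 1) := by rw [hconst j, hconst (j + 1)]
      _ = 1 := by simp [π, hj]
  have slot : ∀ t, (π t u : Fin k → Fin 3) i = t →
      (t = j ∧ (u : Fin k → Fin 3) i = j) ∨ (t ≠ j ∧ (u : Fin k → Fin 3) i = t) := by
    intro t ht
    by_cases htj : t = j
    · subst htj
      exact .inl ⟨rfl, (hσ u i).1 (by simpa [π] using ht)⟩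
    · exact .inr ⟨htj, by simpa [π, htj] using ht⟩
  rcases slot a ha with ⟨rfl, ha'⟩ | ⟨ha, ha'⟩ <;> rcases slot b hb with ⟨rfl, hb'⟩ | ⟨hb, hb'⟩
  · exact hab rfl
  · exact hb (hb'.symm.trans ha')
  · exact ha (ha'.symm.trans hb')
  · exact hab (ha'.symm.trans hb')

lemma eq_of_forall_apply_eq_iff (h : IsUSP U) (j : Fin 3) {u v : Fin k → Fin 3}
    (hu : u ∈ U) (hv : v ∈ U) (huv : ∀ i, u i = j ↔ v i = j) : u = v := by
  have hswap := h.eq_one_of_forall_apply_eq_iff j (Equiv.swap ⟨u, hu⟩ ⟨v, hv⟩) fun w i => by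
    rw [Equiv.swap_apply_def]
    split_ifs with hwu hwv
    · rw [hwu]; exact (huv i).symm
    · rw [hwv]; exact huv i
    · rfl
  simpa using Equiv.swap_eq_one_iff.1 hswap

lemma card_le_choose (h : IsUSP U) {V : Finset (Fin k → Fin 3)} (hV : ↑V ⊆ U) (j : Fin 3)
    {n : ℕ} (hn : ∀ u ∈ V, #{i | u i = j} = n) : #V ≤ k.choose n := by
  have hmaps : ∀ u ∈ V, ({i | u i = j} : Finset (Fin k)) ∈ powersetCard n (univ : Finset (Fin k)) :=
    fun u hu => mem_powersetCard.2 ⟨subset_univ _, hn u hu⟩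
  have hinj : Set.InjOn (fun u : Fin k → Fin 3 => ({i | u i = j} : Finset (Fin k))) V :=
    fun u hu v hv huv => h.eq_of_forall_apply_eq_iff j (hV hu) (hV hv) fun i => by
      simpa using Finset.ext_iff.1 huv i
  simpa using card_le_card_of_injOn _ hmaps hinj

end IsUSP

theorem IsUSP.exists_card_le {k : ℕ} {U : Finset (Fin k → Fin 3)}
    (h : IsUSP (U : Set (Fin k → Fin 3))) :
    ∃ n₁ n₂ n₃ : ℕ, n₁ + n₂ + n₃ = k ∧
      #U ≤ (k + 2).choose 2 * min (k.choose n₁) (min (k.choose n₂) (k.choose n₃)) := by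
  obtain ⟨s, hs⟩ := U.exists_card_le_card_mul_card_fiber letterContent
  have hcard : Fintype.card (Sym (Fin 3) k) = (k + 2).choose 2 := by
    rw [Sym.card_sym_eq_choose, Fintype.card_fin, show 3 + k - 1 = k + 2 by omega,
      Nat.choose_symm_add]
  have hfiber : ∀ j, #{u ∈ U | letterContent u = s} ≤ k.choose ((s : Multiset (Fin 3)).count j) :=
    fun j => h.card_le_choose (coe_subset.2 (filter_subset _ _)) j fun u hu => by
      rw [← count_letterContent, (mem_filter.1 hu).2]
  rw [hcard] at hs
  refine ⟨_, _, _, ?_, hs.trans (Nat.mul_le_mul_left _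
    (le_min (hfiber 0) (le_min (hfiber 1) (hfiber 2))))⟩
  have := Multiset.sum_count_eq_card (s := univ) (m := (s : Multiset (Fin 3))) fun _ _ => mem_univ _
  rwa [Fin.sum_univ_three, Sym.card_coe] at this

lemma choose_le_pow_of_three_mul_le {k m : ℕ} (hm : 3 * m ≤ k) :
    (k.choose m : ℝ) ≤ (3 / 2 ^ ((2 : ℝ) / 3)) ^ k := by
  have hbinom : k.choose m * 2 ^ (k - m) ≤ 3 ^ k := by
    calc k.choose m * 2 ^ (k - m) = 1 ^ m * 2 ^ (k - m) * k.choose m := by ring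
      _ ≤ ∑ i ∈ range (k + 1), 1 ^ i * 2 ^ (k - i) * k.choose i :=
          single_le_sum (f := fun i => 1 ^ i * 2 ^ (k - i) * k.choose i)
            (fun _ _ => Nat.zero_le _) (mem_range.2 (by omega))
      _ = (1 + 2) ^ k := (add_pow 1 2 k).symm
  have hexp : ((2 : ℝ) ^ ((2 : ℝ) / 3)) ^ k ≤ 2 ^ (k - m) := by
    rw [← Real.rpow_natCast, ← Real.rpow_mul zero_le_two, ← Real.rpow_natCast 2]
    apply Real.rpow_le_rpow_of_exponent_le one_le_two
    rw [Nat.cast_sub (by omega)]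
    have : (3 * m : ℝ) ≤ k := by exact_mod_cast hm
    linarith
  rw [div_pow, le_div_iff₀ (by positivity)]
  calc (k.choose m : ℝ) * (2 ^ ((2 : ℝ) / 3)) ^ k ≤ k.choose m * 2 ^ (k - m) := by gcongr
    _ ≤ 3 ^ k := by exact_mod_cast hbinom

theorem IsUSP.card_le_choose_two_mul_pow {k : ℕ} {U : Finset (Fin k → Fin 3)}
    (h : IsUSP (U : Set (Fin k → Fin 3))) :
    (#U : ℝ) ≤ (k + 2).choose 2 * (3 / 2 ^ ((2 : ℝ) / 3)) ^ k := by
  obtain ⟨n₁, n₂, n₃, hsum, hU⟩ := h.exists_card_le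
  obtain ⟨m, hm, hmin⟩ : ∃ m, 3 * m ≤ k ∧
      min (k.choose n₁) (min (k.choose n₂) (k.choose n₃)) ≤ k.choose m := by
    rcases (show 3 * n₁ ≤ k ∨ 3 * n₂ ≤ k ∨ 3 * n₃ ≤ k by omega) with hm | hm | hm
    · exact ⟨n₁, hm, min_le_left _ _⟩
    · exact ⟨n₂, hm, (min_le_right _ _).trans (min_le_left _ _)⟩
    · exact ⟨n₃, hm, (min_le_right _ _).trans (min_le_right _ _)⟩
  calc (#U : ℝ) ≤ ((k + 2).choose 2 * k.choose m : ℕ) := by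
        exact_mod_cast hU.trans (Nat.mul_le_mul_left _ hmin)
    _ ≤ (k + 2).choose 2 * (3 / 2 ^ ((2 : ℝ) / 3)) ^ k := by
        push_cast
        gcongr
        exact choose_le_pow_of_three_mul_le hm

lemma choose_two_add_two_le {k : ℕ} (hk : 1 ≤ k) : (k + 2).choose 2 ≤ 9 * k ^ 2 := by
  rw [Nat.choose_two_right]
  apply Nat.div_le_of_le_mul
  rw [show k + 2 - 1 = k + 1 by omega]
  nlinarith

lemma eventually_choose_two_add_two_le_pow {r : ℝ} (hr : 1 < r) :
    ∀ᶠ k : ℕ in atTop, ((k + 2).choose 2 : ℝ) ≤ r ^ k := by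
  filter_upwards [(isLittleO_pow_const_const_pow_of_one_lt (R := ℝ) 2 hr).bound
    (show (0 : ℝ) < 1 / 9 by norm_num), eventually_ge_atTop 1] with k hk hk1
  rw [norm_pow, Real.norm_natCast, norm_pow, Real.norm_of_nonneg (by positivity)] at hk
  calc ((k + 2).choose 2 : ℝ) ≤ (9 * k ^ 2 : ℕ) := by exact_mod_cast choose_two_add_two_le hk1
    _ ≤ r ^ k := by push_cast; linarith

theorem stmt_6 :
    (∀ (k : ℕ) (U : Finset (Fin k → Fin 3)), IsUSP (U : Set (Fin k → Fin 3)) →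
      ∃ n₁ n₂ n₃ : ℕ, n₁ + n₂ + n₃ = k ∧
        U.card ≤ (k + 2).choose 2 *
          min (k.choose n₁) (min (k.choose n₂) (k.choose n₃))) ∧
    (∀ ε : ℝ, 0 < ε → ∃ K : ℕ, ∀ k ≥ K, ∀ U : Finset (Fin k → Fin 3),
      IsUSP (U : Set (Fin k → Fin 3)) →
        (U.card : ℝ) ≤ (3 / 2 ^ ((2 : ℝ) / 3) + ε) ^ k) := by
  refine ⟨fun k U h => h.exists_card_le, fun ε hε => ?_⟩
  set c : ℝ := 3 / 2 ^ ((2 : ℝ) / 3)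
  have hc : 0 < c := by positivity
  obtain ⟨K, hK⟩ := eventually_atTop.1 <|
    eventually_choose_two_add_two_le_pow (r := 1 + ε / c) (by simp [hε, hc])
  refine ⟨K, fun k hk U hU => ?_⟩
  calc (U.card : ℝ) ≤ (k + 2).choose 2 * c ^ k := hU.card_le_choose_two_mul_pow
    _ ≤ (1 + ε / c) ^ k * c ^ k := by gcongr; exact hK k hk
    _ = (c + ε) ^ k := by rw [← mul_pow]; congr 1; field_simp
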